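/- Let G be a connected weighted graph on n ≥ 2 vertices with positive edge weights, let w_min and w_max be the minimum and maximum edge weights, and let α = w_max/w_min. Let ε ≥ 0 and let b, x ∈ ℝⁿ be vectors with bᵀ𝟙 = 0, xᵀ𝟙 = 0, and ‖b − L_G x‖_∞ ≤ ε · w_max · ‖x‖_∞. Then (b − L_G x)ᵀ L_G† (b − L_G x) ≤ 2 n⁶ α⁴ ε² · (xᵀ L_G x). -/

import Mathlib

/-!
Write `r = b - L x` and `Q = rᵀ L† r`. Since `r ⊥ 𝟙`, the vector `y = L† r`, shifted to mean zero,
satisfies `Q = rᵀ y = yᵀ L y`. A Poincaré inequality along a path of the connected graph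
gives `w_min ‖z‖∞² ≤ 2 n zᵀ L z` for every `z ⊥ 𝟙`. Combining it for `z = y` with
`|rᵀ y| ≤ n ‖r‖∞ ‖y‖∞` yields `w_min Q ≤ 2 n³ ‖r‖∞²`; the hypothesis on `‖r‖∞` and the Poincaré
inequality for `z = x` then give `Q ≤ 4 n⁴ α² ε² xᵀ L x`, which is at most the claimed bound.
-/

open Matrix Finset

namespace Matrix

variable {ι R : Type*} [Fintype ι] [CommRing R]

structure IsMoorePenroseInverse (A B : Matrix ι ι R) : Prop where
  mul_mul_left : A * B * A = A
  mul_mul_right : B * A * B = B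
  transpose_mul_left : (A * B)ᵀ = A * B
  transpose_mul_right : (B * A)ᵀ = B * A

namespace IsMoorePenroseInverse

variable {A B C : Matrix ι ι R}

theorem transpose (h : IsMoorePenroseInverse A B) : IsMoorePenroseInverse Aᵀ Bᵀ where
  mul_mul_left := by
    simpa only [Matrix.transpose_mul, Matrix.mul_assoc] using
      congrArg Matrix.transpose h.mul_mul_left
  mul_mul_right := by
    simpa only [Matrix.transpose_mul, Matrix.mul_assoc] using
      congrArg Matrix.transpose h.mul_mul_right
  transpose_mul_left := by
    rw [← Matrix.transpose_mul, transpose_transpose, h.transpose_mul_right]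
  transpose_mul_right := by
    rw [← Matrix.transpose_mul, transpose_transpose, h.transpose_mul_left]

theorem unique (hB : IsMoorePenroseInverse A B) (hC : IsMoorePenroseInverse A C) : B = C :=
  calc B = B * (A * B)ᵀ := by
        rw [hB.transpose_mul_left, ← Matrix.mul_assoc, hB.mul_mul_right]
    _ = B * (A * C * A * B)ᵀ := by rw [hC.mul_mul_left]
    _ = B * (A * B)ᵀ * (A * C)ᵀ := by simp only [Matrix.transpose_mul, Matrix.mul_assoc]
    _ = B * A * C := by
        rw [hB.transpose_mul_left, hC.transpose_mul_left, ← Matrix.mul_assoc, ← Matrix.mul_assoc,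
          hB.mul_mul_right, Matrix.mul_assoc]
    _ = (B * A)ᵀ * (C * A)ᵀ * C := by
        rw [hB.transpose_mul_right, hC.transpose_mul_right, Matrix.mul_assoc (B * A),
          hC.mul_mul_right]
    _ = (C * A * B * A)ᵀ * C := by simp only [Matrix.transpose_mul, Matrix.mul_assoc]
    _ = C := by
        rw [Matrix.mul_assoc C, Matrix.mul_assoc C, hB.mul_mul_left, hC.transpose_mul_right,
          hC.mul_mul_right]

theorem transpose_eq_self (h : IsMoorePenroseInverse A B) (hA : Aᵀ = A) : Bᵀ = B :=
  (h.unique (hA ▸ h.transpose)).symm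

theorem dotProduct_mulVec_eq (h : IsMoorePenroseInverse A B) (hA : Aᵀ = A) (r : ι → R) :
    r ⬝ᵥ B *ᵥ r = B *ᵥ r ⬝ᵥ A *ᵥ (B *ᵥ r) :=
  calc r ⬝ᵥ B *ᵥ r = r ⬝ᵥ Bᵀ *ᵥ (A *ᵥ (B *ᵥ r)) := by
        rw [h.transpose_eq_self hA, mulVec_mulVec, mulVec_mulVec, h.mul_mul_right]
    _ = B *ᵥ r ⬝ᵥ A *ᵥ (B *ᵥ r) := by rw [dotProduct_transpose_mulVec, dotProduct_comm]

end IsMoorePenroseInverse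

end Matrix

namespace SimpleGraph.Walk

variable {V M : Type*} {G : SimpleGraph V}

theorem sum_darts_map_sub [AddCommGroup M] (f : V → M) {i j : V} (p : G.Walk i j) :
    (p.darts.map fun d => f d.fst - f d.snd).sum = f i - f j := by
  induction p with
  | nil => simp
  | cons _ q ih => simp [ih]

theorem IsPath.sq_sub_le_length_mul_sum_darts [DecidableEq V] (f : V → ℝ) {i j : V}
    {p : G.Walk i j} (hp : p.IsPath) :
    (f i - f j) ^ 2 ≤ p.length * ∑ d ∈ p.darts.toFinset, (f d.fst - f d.snd) ^ 2 := by
  have hnodup := darts_nodup_of_support_nodup hp.support_nodup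
  rw [← sum_darts_map_sub f p, ← List.sum_toFinset _ hnodup, ← length_darts,
    ← List.toFinset_card_of_nodup hnodup]
  exact sq_sum_le_card_mul_sum_sq

end SimpleGraph.Walk

section SupNorm

variable {ι : Type*} [Fintype ι]

theorem exists_norm_le_sub_of_sum_eq_zero [Nonempty ι] {z : ι → ℝ} (hz : ∑ i, z i = 0) :
    ∃ i j, ‖z‖ ≤ z i - z j := by
  obtain ⟨i, hi⟩ := Finite.exists_max z
  obtain ⟨j, hj⟩ := Finite.exists_min z
  obtain ⟨k, -, hk⟩ :=
    exists_le_of_sum_le univ_nonempty (f := fun _ => (0 : ℝ)) (g := z) (by simp [hz])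
  obtain ⟨l, -, hl⟩ :=
    exists_le_of_sum_le univ_nonempty (f := z) (g := fun _ => (0 : ℝ)) (by simp [hz])
  refine ⟨i, j, (pi_norm_le_iff_of_nonneg ?_).2 fun m => abs_le.2 ⟨?_, ?_⟩⟩
  · linarith [hi k, hj l]
  · linarith [hi k, hj m]
  · linarith [hi m, hj l]

theorem abs_dotProduct_le_card_mul_norm_mul_norm (r y : ι → ℝ) :
    |r ⬝ᵥ y| ≤ Fintype.card ι * (‖r‖ * ‖y‖) :=
  calc |r ⬝ᵥ y| ≤ ∑ i, |r i| * |y i| := by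
        simpa only [dotProduct, abs_mul] using abs_sum_le_sum_abs (fun i => r i * y i) univ
    _ ≤ ∑ _i : ι, ‖r‖ * ‖y‖ := sum_le_sum fun i _ =>
        mul_le_mul (norm_le_pi_norm r i) (norm_le_pi_norm y i) (abs_nonneg _) (norm_nonneg _)
    _ = Fintype.card ι * (‖r‖ * ‖y‖) := by simp

end SupNorm

section Laplacian

variable {ι R : Type*} [Fintype ι] [DecidableEq ι] [CommRing R]

def weightedLaplacian (w : ι → ι → R) : Matrix ι ι R :=
  of fun u v => if u = v then ∑ s ∈ univ.erase u, w u s else -w u v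

variable {w : ι → ι → R}

theorem weightedLaplacian_mulVec_apply (z : ι → R) (u : ι) :
    (weightedLaplacian w *ᵥ z) u = ∑ v, w u v * (z u - z v) := by
  rw [mulVec, dotProduct, ← add_sum_erase _ _ (mem_univ u),
    ← add_sum_erase _ (fun v => w u v * (z u - z v)) (mem_univ u), sub_self, mul_zero, zero_add]
  simp only [weightedLaplacian, of_apply, if_pos, sum_mul, ← sum_add_distrib]
  refine sum_congr rfl fun v hv => ?_
  rw [if_neg (ne_of_mem_erase hv).symm]
  ring

theorem weightedLaplacian_mulVec_one : weightedLaplacian w *ᵥ 1 = 0 := by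
  ext u
  simp [weightedLaplacian_mulVec_apply]

theorem transpose_weightedLaplacian (hw : ∀ u v, w u v = w v u) :
    (weightedLaplacian w)ᵀ = weightedLaplacian w := by
  ext u v
  by_cases h : u = v
  · subst h; rfl
  · simp [weightedLaplacian, h, Ne.symm h, hw u v]

theorem sum_weightedLaplacian_mulVec (hw : ∀ u v, w u v = w v u) (z : ι → R) :
    ∑ u, (weightedLaplacian w *ᵥ z) u = 0 := by
  have h := dotProduct_transpose_mulVec (weightedLaplacian w) 1 z
  rwa [transpose_weightedLaplacian hw, weightedLaplacian_mulVec_one, dotProduct_zero,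
    one_dotProduct] at h

theorem two_mul_dotProduct_weightedLaplacian_mulVec (hw : ∀ u v, w u v = w v u) (z : ι → R) :
    2 * (z ⬝ᵥ weightedLaplacian w *ᵥ z) = ∑ u, ∑ v, w u v * (z u - z v) ^ 2 := by
  have hform : z ⬝ᵥ weightedLaplacian w *ᵥ z = ∑ u, ∑ v, w u v * (z u * (z u - z v)) := by
    simp only [dotProduct, weightedLaplacian_mulVec_apply, mul_sum]
    exact sum_congr rfl fun u _ => sum_congr rfl fun v _ => by ring
  have hswap :
      ∑ u, ∑ v, w u v * (z u * (z u - z v)) = ∑ u, ∑ v, w u v * (z v * (z v - z u)) := by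
    rw [sum_comm]
    simp only [hw]
  rw [two_mul, hform]
  nth_rewrite 2 [hswap]
  rw [← sum_add_distrib]
  exact sum_congr rfl fun u _ => by rw [← sum_add_distrib]; exact sum_congr rfl fun v _ => by ring

end Laplacian

section RealLaplacian

variable {ι : Type*} [Fintype ι] [DecidableEq ι] {w : ι → ι → ℝ}

theorem dotProduct_weightedLaplacian_mulVec_nonneg (hw : ∀ u v, w u v = w v u)
    (hnonneg : ∀ u v, 0 ≤ w u v) (z : ι → ℝ) : 0 ≤ z ⬝ᵥ weightedLaplacian w *ᵥ z := by
  have h := two_mul_dotProduct_weightedLaplacian_mulVec hw z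
  have : 0 ≤ ∑ u, ∑ v, w u v * (z u - z v) ^ 2 :=
    sum_nonneg fun u _ => sum_nonneg fun v _ => mul_nonneg (hnonneg u v) (sq_nonneg _)
  linarith

theorem sum_darts_le_two_mul_dotProduct_weightedLaplacian_mulVec
    (hw : ∀ u v, w u v = w v u) (hnonneg : ∀ u v, 0 ≤ w u v) {G : SimpleGraph ι}
    (s : Finset G.Dart) (z : ι → ℝ) :
    ∑ d ∈ s, w d.fst d.snd * (z d.fst - z d.snd) ^ 2 ≤ 2 * (z ⬝ᵥ weightedLaplacian w *ᵥ z) := by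
  rw [two_mul_dotProduct_weightedLaplacian_mulVec hw, ← Fintype.sum_prod_type']
  calc ∑ d ∈ s, w d.fst d.snd * (z d.fst - z d.snd) ^ 2
      = ∑ q ∈ s.image SimpleGraph.Dart.toProd, w q.1 q.2 * (z q.1 - z q.2) ^ 2 :=
        (sum_image (f := fun q : ι × ι => w q.1 q.2 * (z q.1 - z q.2) ^ 2)
          fun _ _ _ _ h => SimpleGraph.Dart.toProd_injective h).symm
    _ ≤ ∑ q : ι × ι, w q.1 q.2 * (z q.1 - z q.2) ^ 2 :=
        sum_le_sum_of_subset_of_nonneg (subset_univ _) fun q _ _ =>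
          mul_nonneg (hnonneg _ _) (sq_nonneg _)

theorem mul_sq_sub_le_of_connected (hw : ∀ u v, w u v = w v u) (hnonneg : ∀ u v, 0 ≤ w u v)
    (hconn : (SimpleGraph.fromRel fun u v : ι => 0 < w u v).Connected) {wmin : ℝ}
    (hwmin : 0 ≤ wmin) (hmin : ∀ u v, u ≠ v → 0 < w u v → wmin ≤ w u v) (z : ι → ℝ) (i j : ι) :
    wmin * (z i - z j) ^ 2 ≤ 2 * Fintype.card ι * (z ⬝ᵥ weightedLaplacian w *ᵥ z) := by
  obtain ⟨p⟩ := hconn.preconnected i j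
  have hp := p.bypass_isPath
  set D := p.bypass.darts.toFinset
  have hlen : (p.bypass.length : ℝ) ≤ Fintype.card ι := by exact_mod_cast hp.length_lt.le
  have hD : 0 ≤ ∑ d ∈ D, (z d.fst - z d.snd) ^ 2 := sum_nonneg fun _ _ => sq_nonneg _
  have hweight :
      wmin * ∑ d ∈ D, (z d.fst - z d.snd) ^ 2 ≤ 2 * (z ⬝ᵥ weightedLaplacian w *ᵥ z) := by
    refine (mul_sum _ _ _).trans_le (le_trans (sum_le_sum fun d _ => ?_)
      (sum_darts_le_two_mul_dotProduct_weightedLaplacian_mulVec hw hnonneg D z))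
    obtain ⟨hne, hpos⟩ := SimpleGraph.fromRel_adj _ _ _ |>.mp d.adj
    have hpos : 0 < w d.fst d.snd := hpos.elim id fun h => hw d.fst d.snd ▸ h
    exact mul_le_mul_of_nonneg_right (hmin _ _ hne hpos) (sq_nonneg _)
  calc wmin * (z i - z j) ^ 2 ≤ wmin * (p.bypass.length * ∑ d ∈ D, (z d.fst - z d.snd) ^ 2) :=
        mul_le_mul_of_nonneg_left (hp.sq_sub_le_length_mul_sum_darts z) hwmin
    _ = p.bypass.length * (wmin * ∑ d ∈ D, (z d.fst - z d.snd) ^ 2) := by ring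
    _ ≤ Fintype.card ι * (2 * (z ⬝ᵥ weightedLaplacian w *ᵥ z)) :=
        mul_le_mul hlen hweight (mul_nonneg hwmin hD) (Nat.cast_nonneg _)
    _ = 2 * Fintype.card ι * (z ⬝ᵥ weightedLaplacian w *ᵥ z) := by ring

theorem mul_norm_sq_le_of_connected [Nonempty ι] (hw : ∀ u v, w u v = w v u)
    (hnonneg : ∀ u v, 0 ≤ w u v) (hconn : (SimpleGraph.fromRel fun u v : ι => 0 < w u v).Connected)
    {wmin : ℝ} (hwmin : 0 ≤ wmin) (hmin : ∀ u v, u ≠ v → 0 < w u v → wmin ≤ w u v)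
    {z : ι → ℝ} (hz : ∑ i, z i = 0) :
    wmin * ‖z‖ ^ 2 ≤ 2 * Fintype.card ι * (z ⬝ᵥ weightedLaplacian w *ᵥ z) := by
  obtain ⟨i, j, hij⟩ := exists_norm_le_sub_of_sum_eq_zero hz
  calc wmin * ‖z‖ ^ 2 ≤ wmin * (z i - z j) ^ 2 := by gcongr
    _ ≤ _ := mul_sq_sub_le_of_connected hw hnonneg hconn hwmin hmin z i j

namespace Matrix.IsMoorePenroseInverse

variable {H : Matrix ι ι ℝ}

/-- The witness is `H r` shifted to mean zero: the shift is invisible to both quadratic forms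
because `r ⊥ 𝟙` and `L 𝟙 = 0`. -/
theorem exists_sum_eq_zero_of_weightedLaplacian [Nonempty ι] (hw : ∀ u v, w u v = w v u)
    (hH : (weightedLaplacian w).IsMoorePenroseInverse H) {r : ι → ℝ} (hr : ∑ i, r i = 0) :
    ∃ y : ι → ℝ, ∑ i, y i = 0 ∧ r ⬝ᵥ H *ᵥ r = r ⬝ᵥ y ∧
      r ⬝ᵥ H *ᵥ r = y ⬝ᵥ weightedLaplacian w *ᵥ y := by
  set m := (∑ i, (H *ᵥ r) i) / Fintype.card ι
  refine ⟨H *ᵥ r - m • 1, ?_, ?_, ?_⟩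
  · simp only [Pi.sub_apply, Pi.smul_apply, Pi.one_apply, smul_eq_mul, mul_one, sum_sub_distrib,
      sum_const, card_univ, nsmul_eq_mul, m]
    field_simp
    ring
  · rw [dotProduct_sub, dotProduct_smul, dotProduct_one, hr, smul_zero, sub_zero]
  · rw [mulVec_sub, mulVec_smul, weightedLaplacian_mulVec_one, smul_zero, sub_zero,
      sub_dotProduct, smul_dotProduct, one_dotProduct, sum_weightedLaplacian_mulVec hw, smul_zero,
      sub_zero, hH.dotProduct_mulVec_eq (transpose_weightedLaplacian hw)]

theorem mul_dotProduct_mulVec_le_of_weightedLaplacian [Nonempty ι] (hw : ∀ u v, w u v = w v u)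
    (hnonneg : ∀ u v, 0 ≤ w u v) (hconn : (SimpleGraph.fromRel fun u v : ι => 0 < w u v).Connected)
    {wmin : ℝ} (hwmin : 0 ≤ wmin) (hmin : ∀ u v, u ≠ v → 0 < w u v → wmin ≤ w u v)
    (hH : (weightedLaplacian w).IsMoorePenroseInverse H) {r : ι → ℝ} (hr : ∑ i, r i = 0) :
    wmin * (r ⬝ᵥ H *ᵥ r) ≤ 2 * Fintype.card ι ^ 3 * ‖r‖ ^ 2 := by
  obtain ⟨y, hy, hQr, hQy⟩ := hH.exists_sum_eq_zero_of_weightedLaplacian hw hr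
  set Q := r ⬝ᵥ H *ᵥ r
  set n : ℝ := (Fintype.card ι : ℝ)
  have hQ0 : 0 ≤ Q := hQy ▸ dotProduct_weightedLaplacian_mulVec_nonneg hw hnonneg y
  have hPy : wmin * ‖y‖ ^ 2 ≤ 2 * n * Q :=
    hQy ▸ mul_norm_sq_le_of_connected hw hnonneg hconn hwmin hmin hy
  have hHolder : Q ≤ n * (‖r‖ * ‖y‖) :=
    hQr ▸ (le_abs_self _).trans (abs_dotProduct_le_card_mul_norm_mul_norm r y)
  rcases hQ0.eq_or_lt with hQ | hQ
  · rw [← hQ, mul_zero]; positivity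
  refine le_of_mul_le_mul_right ?_ hQ
  calc wmin * Q * Q ≤ wmin * (n * (‖r‖ * ‖y‖)) ^ 2 := by rw [mul_assoc, ← sq]; gcongr
    _ = n ^ 2 * ‖r‖ ^ 2 * (wmin * ‖y‖ ^ 2) := by ring
    _ ≤ n ^ 2 * ‖r‖ ^ 2 * (2 * n * Q) := by gcongr
    _ = 2 * n ^ 3 * ‖r‖ ^ 2 * Q := by ring

theorem sq_mul_dotProduct_mulVec_sub_le [Nonempty ι] (hw : ∀ u v, w u v = w v u)
    (hnonneg : ∀ u v, 0 ≤ w u v) (hconn : (SimpleGraph.fromRel fun u v : ι => 0 < w u v).Connected)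
    {wmin : ℝ} (hwmin : 0 ≤ wmin) (hmin : ∀ u v, u ≠ v → 0 < w u v → wmin ≤ w u v)
    (hH : (weightedLaplacian w).IsMoorePenroseInverse H) {b x : ι → ℝ} (hb : ∑ i, b i = 0)
    (hx : ∑ i, x i = 0) {c : ℝ} (hc : ‖b - weightedLaplacian w *ᵥ x‖ ≤ c * ‖x‖) :
    wmin ^ 2 * ((b - weightedLaplacian w *ᵥ x) ⬝ᵥ H *ᵥ (b - weightedLaplacian w *ᵥ x))
      ≤ 4 * Fintype.card ι ^ 4 * c ^ 2 * (x ⬝ᵥ weightedLaplacian w *ᵥ x) := by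
  set r := b - weightedLaplacian w *ᵥ x
  set n : ℝ := (Fintype.card ι : ℝ)
  have hr : ∑ i, r i = 0 := by simp [r, sum_sub_distrib, hb, sum_weightedLaplacian_mulVec hw]
  have hQ := hH.mul_dotProduct_mulVec_le_of_weightedLaplacian hw hnonneg hconn hwmin hmin hr
  have hPx := mul_norm_sq_le_of_connected hw hnonneg hconn hwmin hmin hx
  have hr_norm : ‖r‖ ^ 2 ≤ c ^ 2 * ‖x‖ ^ 2 := by
    rw [← mul_pow]; exact pow_le_pow_left₀ (norm_nonneg r) hc 2
  calc wmin ^ 2 * (r ⬝ᵥ H *ᵥ r) = wmin * (wmin * (r ⬝ᵥ H *ᵥ r)) := by ring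
    _ ≤ wmin * (2 * n ^ 3 * ‖r‖ ^ 2) := by gcongr
    _ ≤ wmin * (2 * n ^ 3 * (c ^ 2 * ‖x‖ ^ 2)) := by gcongr
    _ = 2 * n ^ 3 * c ^ 2 * (wmin * ‖x‖ ^ 2) := by ring
    _ ≤ 2 * n ^ 3 * c ^ 2 * (2 * n * (x ⬝ᵥ weightedLaplacian w *ᵥ x)) := by gcongr
    _ = _ := by ring

end Matrix.IsMoorePenroseInverse

end RealLaplacian

theorem stmt_1_general (n : ℕ) (hn : 2 ≤ n)
    (w : Fin n → Fin n → ℝ)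
    (hsymm : ∀ u v, w u v = w v u)
    (hnonneg : ∀ u v, 0 ≤ w u v)
    (hconn : (SimpleGraph.fromRel fun u v : Fin n => 0 < w u v).Connected)
    (wmin wmax : ℝ)
    (hwmin : IsLeast {r : ℝ | ∃ u v : Fin n, u ≠ v ∧ 0 < w u v ∧ w u v = r} wmin)
    (hwmax : IsGreatest {r : ℝ | ∃ u v : Fin n, u ≠ v ∧ 0 < w u v ∧ w u v = r} wmax)
    (α : ℝ) (hα : α = wmax / wmin)
    (L : Matrix (Fin n) (Fin n) ℝ)
    (hL : ∀ u v, L u v = if u = v then ∑ s ∈ univ.erase u, w u s else - w u v)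
    (H : Matrix (Fin n) (Fin n) ℝ)
    (hH1 : L * H * L = L) (hH2 : H * L * H = H)
    (hH3 : (L * H)ᵀ = L * H) (hH4 : (H * L)ᵀ = H * L)
    (ε : ℝ) (b x : Fin n → ℝ)
    (hb : ∑ i, b i = 0) (hx : ∑ i, x i = 0)
    (hclose : ‖b - L.mulVec x‖ ≤ ε * wmax * ‖x‖) :
    (b - L.mulVec x) ⬝ᵥ H.mulVec (b - L.mulVec x)
      ≤ 2 * (n : ℝ) ^ 6 * α ^ 4 * ε ^ 2 * (x ⬝ᵥ L.mulVec x) := by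
  obtain rfl : L = weightedLaplacian w := Matrix.ext hL
  have : NeZero n := ⟨by omega⟩
  have hmin : ∀ u v, u ≠ v → 0 < w u v → wmin ≤ w u v :=
    fun u v huv h => hwmin.2 ⟨u, v, huv, h, rfl⟩
  have hwmin0 : 0 < wmin := by obtain ⟨u, v, -, hpos, rfl⟩ := hwmin.1; exact hpos
  have hα1 : 1 ≤ α := by rw [hα, one_le_div hwmin0]; exact hwmax.2 hwmin.1
  set N := x ⬝ᵥ weightedLaplacian w *ᵥ x
  have hN0 : 0 ≤ N := dotProduct_weightedLaplacian_mulVec_nonneg hsymm hnonneg x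
  have hc : ‖b - weightedLaplacian w *ᵥ x‖ ≤ ε * α * wmin * ‖x‖ := by
    rwa [hα, mul_assoc ε, div_mul_cancel₀ _ hwmin0.ne']
  have hQ := IsMoorePenroseInverse.sq_mul_dotProduct_mulVec_sub_le hsymm hnonneg hconn
    hwmin0.le hmin ⟨hH1, hH2, hH3, hH4⟩ hb hx hc
  rw [Fintype.card_fin] at hQ
  have hnα : 2 ≤ (n * α) ^ 2 := by
    have : 2 * 1 ≤ n * α := mul_le_mul (by exact_mod_cast hn) hα1 zero_le_one (by positivity)
    nlinarith
  calc _ ≤ 4 * n ^ 4 * α ^ 2 * ε ^ 2 * N :=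
        le_of_mul_le_mul_left (by linarith) (by positivity : 0 < wmin ^ 2)
    _ = 2 * (2 * n ^ 4 * α ^ 2 * ε ^ 2 * N) := by ring
    _ ≤ (n * α) ^ 2 * (2 * n ^ 4 * α ^ 2 * ε ^ 2 * N) := by gcongr
    _ = 2 * n ^ 6 * α ^ 4 * ε ^ 2 * N := by ring

theorem stmt_1 (n : ℕ) (hn : 2 ≤ n)
    (w : Fin n → Fin n → ℝ)
    (hsymm : ∀ u v, w u v = w v u)
    (hnonneg : ∀ u v, 0 ≤ w u v)
    (hconn : (SimpleGraph.fromRel fun u v : Fin n => 0 < w u v).Connected)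
    (wmin wmax : ℝ)
    (hwmin : IsLeast {r : ℝ | ∃ u v : Fin n, u ≠ v ∧ 0 < w u v ∧ w u v = r} wmin)
    (hwmax : IsGreatest {r : ℝ | ∃ u v : Fin n, u ≠ v ∧ 0 < w u v ∧ w u v = r} wmax)
    (α : ℝ) (hα : α = wmax / wmin)
    (L : Matrix (Fin n) (Fin n) ℝ)
    (hL : ∀ u v, L u v = if u = v then ∑ s ∈ univ.erase u, w u s else - w u v)
    (H : Matrix (Fin n) (Fin n) ℝ)
    (hH1 : L * H * L = L) (hH2 : H * L * H = H)
    (hH3 : (L * H)ᵀ = L * H) (hH4 : (H * L)ᵀ = H * L)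
    (ε : ℝ) (hε : 0 ≤ ε) (b x : Fin n → ℝ)
    (hb : ∑ i, b i = 0) (hx : ∑ i, x i = 0)
    (hclose : ‖b - L.mulVec x‖ ≤ ε * wmax * ‖x‖) :
    (b - L.mulVec x) ⬝ᵥ H.mulVec (b - L.mulVec x)
      ≤ 2 * (n : ℝ) ^ 6 * α ^ 4 * ε ^ 2 * (x ⬝ᵥ L.mulVec x) :=
  stmt_1_general n hn w hsymm hnonneg hconn wmin wmax hwmin hwmax α hα L hL H hH1 hH2 hH3 hH4 ε b x
    hb hx hclose
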